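/- arXiv:2002.04491 — 2 statements merged into one kernel-verified Lean document; each statement's English description precedes it below -/
import Mathlib

section
/- Let I_0 be an ideal of K{X}°, f ∈ K{X}°, I = I_0 + ⟨f⟩, and M = {(u,v) ∈ K{X}° × K{X}° : uf - v ∈ I_0}. If G = {(u_1,v_1),…,(u_s,v_s)} is a strong Gröbner basis of M, then {u : (u,0) ∈ G} is a Gröbner basis of the colon ideal (I_0 : f). -/
open MvPowerSeries

namespace TateStmt

variable {n : ℕ} {O : Type*} [CommRing O]

/-- The Tate condition: the (π-adic) valuations of the coefficients tend to infinity. -/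
def IsTate (π : O) (f : MvPowerSeries (Fin n) O) : Prop :=
  ∀ N : ℕ, {i : Fin n →₀ ℕ | ¬ π ^ N ∣ MvPowerSeries.coeff i f}.Finite

/-- The integral Tate algebra `K{X}°`, as a subring of the ring of formal power series
over the valuation ring `O = K°`. -/
def TateAlgebra (n : ℕ) (O : Type*) [CommRing O] (π : O) :
    Subring (MvPowerSeries (Fin n) O) where
  carrier := {f | IsTate π f}
  zero_mem' := by
    intro N
    apply Set.Finite.subset (Set.finite_empty)
    intro i hi
    exact hi (Dvd.intro 0 (by simp))
  one_mem' := by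
    intro N
    apply Set.Finite.subset (Set.finite_singleton (0 : Fin n →₀ ℕ))
    intro i hi
    by_contra h
    rw [Set.mem_singleton_iff] at h
    apply hi
    rw [MvPowerSeries.coeff_one, if_neg h]
    exact Dvd.intro 0 (by simp)
  add_mem' := by
    intro f g hf hg N
    apply Set.Finite.subset ((hf N).union (hg N))
    intro i hi
    by_contra h
    simp only [Set.mem_union, Set.mem_setOf_eq, not_or, not_not] at h
    exact hi (by rw [map_add]; exact dvd_add h.1 h.2)
  neg_mem' := by
    intro f hf N
    apply Set.Finite.subset (hf N)
    intro i hi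
    by_contra h
    simp only [Set.mem_setOf_eq, not_not] at h
    exact hi (by rw [map_neg]; exact (dvd_neg).mpr h)
  mul_mem' := by
    intro f g hf hg N
    apply Set.Finite.subset (Set.Finite.add (hf N) (hg N))
    intro i hi
    by_contra h
    apply hi
    rw [MvPowerSeries.coeff_mul]
    apply Finset.dvd_sum
    intro p hp
    rw [Finset.HasAntidiagonal.mem_antidiagonal] at hp
    by_cases h1 : π ^ N ∣ MvPowerSeries.coeff p.1 f
    · exact Dvd.dvd.mul_right h1 _
    · by_cases h2 : π ^ N ∣ MvPowerSeries.coeff p.2 g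
      · exact Dvd.dvd.mul_left h2 _
      · exact absurd (hp ▸ Set.add_mem_add h1 h2) h

/-- Tate monomials `π^a X^i`, identified with pairs `(a, i) ∈ ℕ × ℕ^n`. -/
abbrev TMon (n : ℕ) := ℕ × (Fin n →₀ ℕ)

noncomputable def monMul (a b : TMon n) : TMon n := (a.1 + b.1, a.2 + b.2)
def monDvd (a b : TMon n) : Prop := a.1 ≤ b.1 ∧ a.2 ≤ b.2
noncomputable def monDiv (a b : TMon n) : TMon n := (a.1 - b.1, a.2 - b.2)
noncomputable def monLcm (a b : TMon n) : TMon n := (max a.1 b.1, a.2 ⊔ b.2)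

/-- The valuation-first term order: compare valuations first (a *smaller* valuation gives a
*larger* term), then exponents via the monomial order `mo`. -/
def termLT (mo : MonomialOrder (Fin n)) (a b : TMon n) : Prop :=
  b.1 < a.1 ∨ (a.1 = b.1 ∧ mo.toSyn a.2 < mo.toSyn b.2)

def termLE (mo : MonomialOrder (Fin n)) (a b : TMon n) : Prop :=
  a = b ∨ termLT mo a b

/-- Order on `Option (TMon n)`, where `none` (the "monomial" of `0`) is smallest. -/
def optLT (mo : MonomialOrder (Fin n)) : Option (TMon n) → Option (TMon n) → Prop
  | none, none => False
  | none, some _ => True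
  | some _, none => False
  | some a, some b => termLT mo a b

def optLE (mo : MonomialOrder (Fin n)) (a b : Option (TMon n)) : Prop :=
  a = b ∨ optLT mo a b

noncomputable def optMul (t : TMon n) : Option (TMon n) → Option (TMon n)
  | none => none
  | some a => some (monMul t a)

/-- `(a, i)` is (the monomial of) a term of `f`: the coefficient of `X^i` has valuation
exactly `a`. -/
def IsTerm (π : O) (f : MvPowerSeries (Fin n) O) (m : TMon n) : Prop :=
  π ^ m.1 ∣ MvPowerSeries.coeff m.2 f ∧ ¬ π ^ (m.1 + 1) ∣ MvPowerSeries.coeff m.2 f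

/-- `m` is the leading monomial of `f`. -/
def IsLM (π : O) (mo : MonomialOrder (Fin n)) (f : MvPowerSeries (Fin n) O) (m : TMon n) :
    Prop :=
  IsTerm π f m ∧ ∀ m', IsTerm π f m' → termLE mo m' m

/-- `s` is the leading monomial of `f`, with the convention `LM 0 = none`. -/
def IsLMopt (π : O) (mo : MonomialOrder (Fin n)) (f : MvPowerSeries (Fin n) O) :
    Option (TMon n) → Prop
  | none => f = 0
  | some m => IsLM π mo f m

/-- All coefficients of `f` are divisible by `π^N`, i.e. `val f ≥ N`. -/
def DvdAll (π : O) (N : ℕ) (f : MvPowerSeries (Fin n) O) : Prop :=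
  ∀ i, π ^ N ∣ MvPowerSeries.coeff i f

/-- The Gauss valuation of `f` is exactly `N`. -/
def ValEq (π : O) (f : MvPowerSeries (Fin n) O) (N : ℕ) : Prop :=
  DvdAll π N f ∧ ¬ DvdAll π (N + 1) f

/-- `G` is a Gröbner basis of the ideal `I` of the (integral) Tate algebra. -/
def IsGB (π : O) (mo : MonomialOrder (Fin n)) (G : Set (TateAlgebra n O π))
    (I : Ideal (TateAlgebra n O π)) : Prop :=
  (∀ g ∈ G, g ∈ I) ∧
    ∀ f ∈ I, (f : MvPowerSeries (Fin n) O) ≠ 0 → ∀ mf,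
      IsLM π mo (f : MvPowerSeries (Fin n) O) mf →
        ∃ g ∈ G, ∃ mg, IsLM π mo (g : MvPowerSeries (Fin n) O) mg ∧ monDvd mg mf

/-- The module `M = {(u,v) : u f - v ∈ I₀}`. -/
def SigMod {π : O} (I0 : Ideal (TateAlgebra n O π)) (f : TateAlgebra n O π) :
    Set (TateAlgebra n O π × TateAlgebra n O π) :=
  {p | p.1 * f - p.2 ∈ I0}

/-- `p = (u₁,v₁)` is top-reducible by `q = (u₂,v₂)`. -/
def TopRed (π : O) (mo : MonomialOrder (Fin n))
    (p q : TateAlgebra n O π × TateAlgebra n O π) : Prop :=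
  (q.2 = 0 ∧ ∃ mu mq, IsLM π mo (p.1 : MvPowerSeries (Fin n) O) mu ∧
      IsLM π mo (q.1 : MvPowerSeries (Fin n) O) mq ∧ monDvd mq mu)
  ∨ (p.2 ≠ 0 ∧ q.2 ≠ 0 ∧
      ∃ m1 m2, IsLM π mo (p.2 : MvPowerSeries (Fin n) O) m1 ∧
        IsLM π mo (q.2 : MvPowerSeries (Fin n) O) m2 ∧ monDvd m2 m1 ∧
        ∃ s1 s2, IsLMopt π mo (p.1 : MvPowerSeries (Fin n) O) s1 ∧
          IsLMopt π mo (q.1 : MvPowerSeries (Fin n) O) s2 ∧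
          optLE mo (optMul (monDiv m1 m2) s2) s1)

/-- `G` is a strong Gröbner basis of the module `M = SigMod I0 f`. -/
def IsSGB (π : O) (mo : MonomialOrder (Fin n)) (I0 : Ideal (TateAlgebra n O π))
    (f : TateAlgebra n O π) (G : Set (TateAlgebra n O π × TateAlgebra n O π)) : Prop :=
  G.Finite ∧ G ⊆ SigMod I0 f ∧
    ∀ p ∈ SigMod I0 f, p ≠ 0 → ∃ q ∈ G, TopRed π mo p q

/-- `p` is covered by `q`. -/
def Covers (π : O) (mo : MonomialOrder (Fin n))
    (q p : TateAlgebra n O π × TateAlgebra n O π) : Prop :=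
  ∃ mu mq, IsLM π mo (p.1 : MvPowerSeries (Fin n) O) mu ∧
    IsLM π mo (q.1 : MvPowerSeries (Fin n) O) mq ∧ monDvd mq mu ∧
    ∃ sv sp, IsLMopt π mo (q.2 : MvPowerSeries (Fin n) O) sv ∧
      IsLMopt π mo (p.2 : MvPowerSeries (Fin n) O) sp ∧
      optLT mo (optMul (monDiv mu mq) sv) sp

def CoveredBy (π : O) (mo : MonomialOrder (Fin n))
    (p : TateAlgebra n O π × TateAlgebra n O π)
    (G : Set (TateAlgebra n O π × TateAlgebra n O π)) : Prop :=
  ∃ q ∈ G, Covers π mo q p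

/-- The Tate series `π^a X^i`, as an element of the Tate algebra. -/
noncomputable def monTA (π : O) (m : TMon n) : TateAlgebra n O π :=
  ⟨MvPowerSeries.monomial m.2 (π ^ m.1), by
    intro N
    apply Set.Finite.subset (Set.finite_singleton m.2)
    intro i hi
    by_contra h
    rw [Set.mem_singleton_iff] at h
    apply hi
    rw [MvPowerSeries.coeff_monomial, if_neg h]
    exact Dvd.intro 0 (by simp)⟩

noncomputable def smulPair (π : O) (m : TMon n) (p : TateAlgebra n O π × TateAlgebra n O π) :
    TateAlgebra n O π × TateAlgebra n O π :=
  (monTA π m * p.1, monTA π m * p.2)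

/-- `r` is the J-pair of `(p, q)` (with `p` carrying the larger signature part). -/
def IsJPair (π : O) (mo : MonomialOrder (Fin n))
    (p q r : TateAlgebra n O π × TateAlgebra n O π) : Prop :=
  ∃ m1 m2, IsLM π mo (p.2 : MvPowerSeries (Fin n) O) m1 ∧
    IsLM π mo (q.2 : MvPowerSeries (Fin n) O) m2 ∧
    (∃ s1 s2, IsLMopt π mo (p.1 : MvPowerSeries (Fin n) O) s1 ∧
      IsLMopt π mo (q.1 : MvPowerSeries (Fin n) O) s2 ∧
      optLT mo (optMul (monDiv (monLcm m1 m2) m2) s2)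
        (optMul (monDiv (monLcm m1 m2) m1) s1)) ∧
    r = smulPair π (monDiv (monLcm m1 m2) m1) p

section Residue

variable {k : Type*} [Field k]

/-- `P = ρ(f)`, the reduction mod `π` of `π^{-val f} f`. -/
def IsRho (π : O) (φ : O →+* k) (f : MvPowerSeries (Fin n) O)
    (P : MvPolynomial (Fin n) k) : Prop :=
  ∃ (N : ℕ) (g : MvPowerSeries (Fin n) O), f = (π ^ N) • g ∧
    (∃ i, ¬ π ∣ MvPowerSeries.coeff i g) ∧
    ∀ i, MvPolynomial.coeff i P = φ (MvPowerSeries.coeff i g)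

def rhoSet (π : O) (φ : O →+* k) (S : Set (TateAlgebra n O π)) :
    Set (MvPolynomial (Fin n) k) :=
  {P | ∃ f ∈ S, IsRho π φ (f : MvPowerSeries (Fin n) O) P}

/-- `Ī_N`: the image in `k[X]` of `π^{-N} (I ∩ π^N K{X}°)`. -/
def BarIdeal (π : O) (φ : O →+* k) (I : Ideal (TateAlgebra n O π)) (N : ℕ) :
    Set (MvPolynomial (Fin n) k) :=
  {P | ∃ f ∈ I, ∃ g : MvPowerSeries (Fin n) O, (f : MvPowerSeries (Fin n) O) = (π ^ N) • g ∧
    ∀ i, MvPolynomial.coeff i P = φ (MvPowerSeries.coeff i g)}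

/-- `d` is the leading exponent of the polynomial `P` for the monomial order `mo`. -/
def IsPolyLM (mo : MonomialOrder (Fin n)) (P : MvPolynomial (Fin n) k)
    (d : Fin n →₀ ℕ) : Prop :=
  MvPolynomial.coeff d P ≠ 0 ∧ ∀ e, MvPolynomial.coeff e P ≠ 0 → mo.toSyn e ≤ mo.toSyn d

/-- `G` is a Gröbner basis of the set (ideal) `J` of polynomials over the residue field. -/
def IsPolyGB (mo : MonomialOrder (Fin n)) (G : Set (MvPolynomial (Fin n) k))
    (J : Set (MvPolynomial (Fin n) k)) : Prop :=
  G ⊆ J ∧ ∀ P ∈ J, P ≠ 0 → ∀ d, IsPolyLM mo P d →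
    ∃ Q ∈ G, ∃ e, IsPolyLM mo Q e ∧ e ≤ d

end Residue

end TateStmt

/-! An element `u` of `(I₀ : f)` gives `(u, 0) ∈ M`. A pair with vanishing second component can
only be top-reduced through the first clause, so the reducer is some `(u', 0) ∈ G` with
`LM(u') ∣ LM(u)`. -/

namespace TateStmt

variable {n : ℕ} {O : Type*} [CommRing O]

theorem termLE_antisymm (mo : MonomialOrder (Fin n)) {a b : TMon n}
    (hab : termLE mo a b) (hba : termLE mo b a) : a = b := by
  rcases hab with rfl | hab
  · rfl
  rcases hba with rfl | hba
  · rfl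
  exfalso
  rcases hab with hab | ⟨hab₁, hab₂⟩ <;> rcases hba with hba | ⟨hba₁, hba₂⟩
  · exact lt_asymm hab hba
  · omega
  · omega
  · exact lt_asymm hab₂ hba₂

theorem IsLM.unique {π : O} {mo : MonomialOrder (Fin n)} {f : MvPowerSeries (Fin n) O}
    {m m' : TMon n} (h : IsLM π mo f m) (h' : IsLM π mo f m') : m = m' :=
  termLE_antisymm mo (h'.2 m h.1) (h.2 m' h'.1)

theorem mk_zero_mem_sigMod_iff {π : O} {I0 : Ideal (TateAlgebra n O π)}
    {f u : TateAlgebra n O π} :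
    (u, 0) ∈ SigMod I0 f ↔ u ∈ I0.colon (Ideal.span {f}) := by
  rw [Ideal.span, Submodule.mem_colon_span_singleton, smul_eq_mul]
  simp [SigMod]

theorem TopRed.of_snd_eq_zero {π : O} {mo : MonomialOrder (Fin n)} {u : TateAlgebra n O π}
    {q : TateAlgebra n O π × TateAlgebra n O π} (h : TopRed π mo (u, 0) q) :
    q.2 = 0 ∧ ∃ mu mq, IsLM π mo (u : MvPowerSeries (Fin n) O) mu ∧
      IsLM π mo (q.1 : MvPowerSeries (Fin n) O) mq ∧ monDvd mq mu :=
  h.resolve_right fun h' => h'.1 rfl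

end TateStmt

open TateStmt MvPowerSeries

variable {n : ℕ} {O : Type*} [CommRing O] [IsDomain O] [IsDiscreteValuationRing O]

theorem statement_5_general (π : O) (mo : MonomialOrder (Fin n))
    (I0 : Ideal (TateAlgebra n O π)) (f : TateAlgebra n O π)
    (G : Set (TateAlgebra n O π × TateAlgebra n O π))
    (hSGB : IsSGB π mo I0 f G) :
    IsGB π mo {u : TateAlgebra n O π | (u, (0 : TateAlgebra n O π)) ∈ G}
      (Submodule.colon I0 (Ideal.span {f})) := by
  obtain ⟨-, hGM, hred⟩ := hSGB
  refine ⟨fun u hu => mk_zero_mem_sigMod_iff.1 (hGM hu), fun u hu hu0 mu hmu => ?_⟩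
  have hne : ((u, 0) : TateAlgebra n O π × TateAlgebra n O π) ≠ 0 := by simpa using hu0
  obtain ⟨q, hqG, hq⟩ := hred _ (mk_zero_mem_sigMod_iff.2 hu) hne
  obtain ⟨hq2, mu', mq, hmu', hmq, hdvd⟩ := hq.of_snd_eq_zero
  refine ⟨q.1, ?_, mq, hmq, hmu'.unique hmu ▸ hdvd⟩
  change (q.1, 0) ∈ G
  rwa [← hq2]

/-- if `G` is a strong Gröbner basis of `M = {(u,v) : u f - v ∈ I₀}`, then
`{u : (u,0) ∈ G}` is a Gröbner basis of the colon ideal `(I₀ : f)`. -/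
theorem statement_5 (π : O) (hπ : Irreducible π) (mo : MonomialOrder (Fin n))
    (I0 : Ideal (TateAlgebra n O π)) (f : TateAlgebra n O π)
    (G : Set (TateAlgebra n O π × TateAlgebra n O π))
    (hSGB : IsSGB π mo I0 f G) :
    IsGB π mo {u : TateAlgebra n O π | (u, (0 : TateAlgebra n O π)) ∈ G}
      (Submodule.colon I0 (Ideal.span {f})) :=
  statement_5_general π mo I0 f G hSGB
end

section
/- Let W be the set of pairs (u,v) ∈ M that are top-reducible by no element of G, where G contains (1,f) and {g : (0,g) ∈ G} is a Gröbner basis of I_0. Then W contains no pair (u,v) with u = 0, and no pair (u,v) with LM(v) ∈ LM(I_0). -/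
/-!
If `u = 0` then `v = u f - (u f - v) ∈ I₀`; so in both cases `LM(v)` is the leading monomial of a
nonzero element of `I₀`, and the Gröbner basis property yields `(0, g) ∈ G` with `LM(g) ∣ LM(v)`.
Since `(0, g)` has the smallest possible signature, it top-reduces `(u, v)`. The leading monomials
involved exist because `O` is a domain in which `π` has finite multiplicity at every nonzero
coefficient, and the Tate condition leaves finitely many terms of least valuation.
-/

open MvPowerSeries

namespace TateStmt

variable {n : ℕ} {O : Type*} [CommRing O]

theorem IsLM.ne_zero {π : O} {mo : MonomialOrder (Fin n)} {f : MvPowerSeries (Fin n) O}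
    {m : TMon n} (hm : IsLM π mo f m) : f ≠ 0 := by
  rintro rfl
  exact hm.1.2 (by simp)

theorem optLE_none (mo : MonomialOrder (Fin n)) (s : Option (TMon n)) : optLE mo none s := by
  cases s
  · exact Or.inl rfl
  · exact Or.inr trivial

theorem exists_isTerm [IsCancelMulZero O] [WfDvdMonoid O] {π : O} (hπ : ¬IsUnit π)
    {f : MvPowerSeries (Fin n) O} (hf : f ≠ 0) : ∃ m, IsTerm π f m := by
  obtain ⟨i, hi⟩ := (ne_zero_iff_exists_coeff_ne_zero f).mp hf
  exact ⟨(multiplicity π (coeff i f), i), pow_multiplicity_dvd _ _,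
    (FiniteMultiplicity.of_not_isUnit hπ hi).not_pow_dvd_of_multiplicity_lt (Nat.lt_succ_self _)⟩

/-- The leading monomial has the least valuation among the terms of `f`, and among the
(finitely many, by the Tate condition) terms of that valuation the largest exponent. -/
theorem exists_isLM [IsCancelMulZero O] [WfDvdMonoid O] {π : O} (hπ : ¬IsUnit π)
    (mo : MonomialOrder (Fin n)) {f : MvPowerSeries (Fin n) O} (hT : IsTate π f) (hf : f ≠ 0) :
    ∃ m, IsLM π mo f m := by
  classical
  have hterm : ∃ a i, IsTerm π f (a, i) := by
    obtain ⟨⟨a, i⟩, hm⟩ := exists_isTerm hπ hf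
    exact ⟨a, i, hm⟩
  obtain ⟨i, hi, hmax⟩ := Set.exists_max_image {i | IsTerm π f (Nat.find hterm, i)} mo.toSyn
    ((hT (Nat.find hterm + 1)).subset fun _ hj => hj.2) (Nat.find_spec hterm)
  refine ⟨(Nat.find hterm, i), hi, fun ⟨b, j⟩ hj => ?_⟩
  rcases (Nat.find_min' hterm ⟨j, hj⟩).lt_or_eq with hlt | hb
  · exact Or.inr (Or.inl hlt)
  · subst hb
    rcases (hmax j hj).lt_or_eq with hlt | heq
    · exact Or.inr (Or.inr ⟨rfl, hlt⟩)
    · exact Or.inl (Prod.ext rfl (mo.toSyn.injective heq))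

theorem exists_isLMopt [IsCancelMulZero O] [WfDvdMonoid O] {π : O} (hπ : ¬IsUnit π)
    (mo : MonomialOrder (Fin n)) {f : MvPowerSeries (Fin n) O} (hT : IsTate π f) :
    ∃ s, IsLMopt π mo f s := by
  by_cases hf : f = 0
  · exact ⟨none, hf⟩
  · obtain ⟨m, hm⟩ := exists_isLM hπ mo hT hf
    exact ⟨some m, hm⟩

/-- The signature `LM 0 = none` of `(0, g)` lies below every signature, so only the divisibility
condition on the second components is left. -/
theorem topRed_zero_of_monDvd [IsCancelMulZero O] [WfDvdMonoid O] {π : O} (hπ : ¬IsUnit π)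
    {mo : MonomialOrder (Fin n)} {p : TateAlgebra n O π × TateAlgebra n O π}
    {g : TateAlgebra n O π} {m mg : TMon n} (hm : IsLM π mo (p.2 : MvPowerSeries (Fin n) O) m)
    (hg : IsLM π mo (g : MvPowerSeries (Fin n) O) mg) (hdvd : monDvd mg m) :
    TopRed π mo p (0, g) := by
  obtain ⟨s, hs⟩ := exists_isLMopt hπ mo p.1.2
  refine Or.inr ⟨fun h => hm.ne_zero (congrArg Subtype.val h),
    fun h => hg.ne_zero (congrArg Subtype.val h), m, mg, hm, hg, hdvd, s, none, hs, rfl,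
    optLE_none mo s⟩

theorem exists_topRed_of_isLM_mem [IsCancelMulZero O] [WfDvdMonoid O] {π : O} (hπ : ¬IsUnit π)
    {mo : MonomialOrder (Fin n)} {I : Ideal (TateAlgebra n O π)}
    {G : Set (TateAlgebra n O π × TateAlgebra n O π)}
    (hG : IsGB π mo {g | ((0 : TateAlgebra n O π), g) ∈ G} I)
    {p : TateAlgebra n O π × TateAlgebra n O π} {m : TMon n}
    (hm : IsLM π mo (p.2 : MvPowerSeries (Fin n) O) m) {h : TateAlgebra n O π} (hI : h ∈ I)
    (hh : IsLM π mo (h : MvPowerSeries (Fin n) O) m) :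
    ∃ q ∈ G, TopRed π mo p q := by
  obtain ⟨g, hgG, mg, hg, hdvd⟩ := hG.2 h hI hh.ne_zero m hh
  exact ⟨(0, g), hgG, topRed_zero_of_monDvd hπ hm hg hdvd⟩

end TateStmt

open TateStmt MvPowerSeries

variable {n : ℕ} {O : Type*} [CommRing O] [IsDomain O] [IsDiscreteValuationRing O]

theorem statement_9_general (π : O) (hπ : Irreducible π) (mo : MonomialOrder (Fin n))
    (I0 : Ideal (TateAlgebra n O π)) (f : TateAlgebra n O π)
    (G : Set (TateAlgebra n O π × TateAlgebra n O π))
    (hG0 : IsGB π mo {g : TateAlgebra n O π | ((0 : TateAlgebra n O π), g) ∈ G} I0) :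
    ∀ p ∈ SigMod I0 f, p ≠ 0 → (∀ q ∈ G, ¬ TopRed π mo p q) →
      p.1 ≠ 0 ∧
      ∀ m, IsLM π mo (p.2 : MvPowerSeries (Fin n) O) m →
        ¬ ∃ h ∈ I0, (h : MvPowerSeries (Fin n) O) ≠ 0 ∧
          IsLM π mo (h : MvPowerSeries (Fin n) O) m := by
  intro p hp hp0 hW
  refine ⟨fun hu => ?_, fun m hm ⟨h, hI, _, hh⟩ => ?_⟩
  · have hvI : p.2 ∈ I0 := by
      simpa [SigMod, hu] using hp
    have hv : (p.2 : MvPowerSeries (Fin n) O) ≠ 0 := fun hv =>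
      hp0 (Prod.ext hu (Subtype.ext hv))
    obtain ⟨m, hm⟩ := exists_isLM hπ.not_isUnit mo p.2.2 hv
    obtain ⟨q, hq, hred⟩ := exists_topRed_of_isLM_mem hπ.not_isUnit hG0 hm hvI hm
    exact hW q hq hred
  · obtain ⟨q, hq, hred⟩ := exists_topRed_of_isLM_mem hπ.not_isUnit hG0 hm hI hh
    exact hW q hq hred

/-- the set `W` of (nonzero) pairs of `M` that are top-reducible by no
element of `G` contains no pair `(u,v)` with `u = 0`, and no pair with `LM(v) ∈ LM(I₀)`. -/
theorem statement_9 (π : O) (hπ : Irreducible π) (mo : MonomialOrder (Fin n))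
    (I0 : Ideal (TateAlgebra n O π)) (f : TateAlgebra n O π)
    (G : Set (TateAlgebra n O π × TateAlgebra n O π))
    (hfin : G.Finite) (hGM : G ⊆ SigMod I0 f)
    (h1f : ((1 : TateAlgebra n O π), f) ∈ G)
    (hG0 : IsGB π mo {g : TateAlgebra n O π | ((0 : TateAlgebra n O π), g) ∈ G} I0) :
    ∀ p ∈ SigMod I0 f, p ≠ 0 → (∀ q ∈ G, ¬ TopRed π mo p q) →
      p.1 ≠ 0 ∧
      ∀ m, IsLM π mo (p.2 : MvPowerSeries (Fin n) O) m →
        ¬ ∃ h ∈ I0, (h : MvPowerSeries (Fin n) O) ≠ 0 ∧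
          IsLM π mo (h : MvPowerSeries (Fin n) O) m :=
  statement_9_general π hπ mo I0 f G hG0
end
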